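/- Determinism of the small-step semantics: if ⟨S | G; L; N⟩ → ⟨S₁ | G₁; L₁; N₁⟩ and ⟨S | G; L; N⟩ → ⟨S₂ | G₂; L₂; N₂⟩, and the opcode evaluation relation ⇓_opc is deterministic, then S₁ = S₂, G₁ = G₂, L₁ = L₂, and N₁ = N₂. -/

import Mathlib

namespace Yul

abbrev Var := String

/-- Yul operational syntax: source-level statements and expressions merged with
    runtime constructs (modes, scoped blocks, break/continue frames, call frames, tuples). -/
inductive Term (Val Op Ext : Type) : Type where
  | block (ss : List (Term Val Op Ext))
  | fundef (f : Var) (ps rs : List Var) (body : Term Val Op Ext)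
  | letdecl (xs : List Var) (e : Term Val Op Ext)
  | assign (xs : List Var) (e : Term Val Op Ext)
  | ite (cond : Term Val Op Ext) (body : Term Val Op Ext)
  | switch (scrut : Term Val Op Ext) (cases : List (Val × Term Val Op Ext))
      (dflt : Term Val Op Ext)
  | forloop (init cond post body : Term Val Op Ext)
  | brk
  | cont
  | leave
  | call (f : Var) (args : List (Term Val Op Ext))
  | opcall (op : Op) (args : List (Term Val Op Ext))
  | var (x : Var)
  | val (v : Val)
  | regular
  | ext (m : Ext)
  | tuple (vs : List Val)
  | scopedBlock (ss : List (Term Val Op Ext)) (Lsave : Var → Option Val)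
      (Nsave : Var → Option (List Var × List Var × Term Val Op Ext))
  | brkFrame (s : Term Val Op Ext)
  | cntFrame (s : Term Val Op Ext)
  | callFrame (s : Term Val Op Ext) (Lsave : Var → Option Val) (rets : List Var)

/-- Local variable stores. -/
abbrev Store (Val : Type) := Var → Option Val

/-- Function namespaces. -/
abbrev NS (Val Op Ext : Type) := Var → Option (List Var × List Var × Term Val Op Ext)

variable {Val Op Ext Gl : Type}

def Dom (L : Store Val) : Set Var := {x | (L x).isSome}

/-- `restrict L1 L` is `L1 ↾ L` : restriction of `L1` to the domain of `L`. -/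
def restrict (L1 L : Store Val) : Store Val :=
  fun x => if (L x).isSome then L1 x else none

def updStore (L : Store Val) (x : Var) (v : Val) : Store Val :=
  fun y => if y = x then some v else L y

def updMany (L : Store Val) (xs : List Var) (vs : List Val) : Store Val :=
  (List.zip xs vs).foldl (fun L p => updStore L p.1 p.2) L

def emptyStore : Store Val := fun _ => none

def updNS (N : NS Val Op Ext) (f : Var)
    (d : List Var × List Var × Term Val Op Ext) : NS Val Op Ext :=
  fun y => if y = f then some d else N y

/-- `funsof`: extend the namespace with the functions defined at the top level of a block. -/
def extendFuns (ss : List (Term Val Op Ext)) (N : NS Val Op Ext) : NS Val Op Ext :=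
  ss.foldl (fun N s =>
    match s with
    | .fundef f ps rs body => updNS N f (ps, rs, body)
    | _ => N) N

/-- Return-value packaging: `⟨⟩ = regular`, `⟨v⟩ = v`, `⟨v⃗⟩` a tuple for more values. -/
def mkRet (vs : List Val) : Term Val Op Ext :=
  match vs with
  | [] => .regular
  | [v] => .val v
  | vs => .tuple vs

/-- A Yul dialect: truth/falsehood of values, the default value, and the
    (possibly failing) opcode evaluation relation `⇓_opc`. -/
structure Dialect (Val Op Ext Gl : Type) where
  isTrue : Val → Prop
  isFalse : Val → Prop
  zero : Val
  opc : Op → List Val → Gl → (List Val ⊕ Ext) → Gl → Prop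

def IsIrregularCore (t : Term Val Op Ext) : Prop :=
  t = .brk ∨ t = .cont ∨ t = .leave

/-- The modes `regular`, `break`, `continue`, `leave`. -/
def IsModeCore (t : Term Val Op Ext) : Prop :=
  t = .regular ∨ t = .brk ∨ t = .cont ∨ t = .leave

/-- All modes, including external irregular modes ℳ. -/
def IsMode (t : Term Val Op Ext) : Prop :=
  IsModeCore t ∨ ∃ m, t = .ext m

/-- Results of completed expressions/calls: a value, a tuple, or `regular`. -/
def IsRet (t : Term Val Op Ext) : Prop :=
  (∃ v, t = .val v) ∨ (∃ vs, t = .tuple vs) ∨ t = .regular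

/-- `S_ret ::= v | ⟨v⃗⟩ | 𝕄`. -/
def IsRetAny (t : Term Val Op Ext) : Prop := IsRet t ∨ IsModeCore t

/-- Evaluation contexts. -/
inductive Ctx (Val Op Ext : Type) : Type where
  | hole
  | scopedC (E : Ctx Val Op Ext) (rest : List (Term Val Op Ext)) (L : Store Val)
      (N : NS Val Op Ext)
  | letC (xs : List Var) (E : Ctx Val Op Ext)
  | assignC (xs : List Var) (E : Ctx Val Op Ext)
  | cntC (E : Ctx Val Op Ext)
  | brkC (E : Ctx Val Op Ext)
  | iteC (E : Ctx Val Op Ext) (body : Term Val Op Ext)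
  | switchC (E : Ctx Val Op Ext) (cases : List (Val × Term Val Op Ext))
      (dflt : Term Val Op Ext)
  | callC (f : Var) (before : List (Term Val Op Ext)) (E : Ctx Val Op Ext)
      (after : List Val)
  | opcallC (op : Op) (before : List (Term Val Op Ext)) (E : Ctx Val Op Ext)
      (after : List Val)
  | frameC (E : Ctx Val Op Ext) (L : Store Val) (rets : List Var)

def plug (E : Ctx Val Op Ext) (t : Term Val Op Ext) : Term Val Op Ext :=
  match E with
  | .hole => t
  | .scopedC E rest L N => .scopedBlock (plug E t :: rest) L N
  | .letC xs E => .letdecl xs (plug E t)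
  | .assignC xs E => .assign xs (plug E t)
  | .cntC E => .cntFrame (plug E t)
  | .brkC E => .brkFrame (plug E t)
  | .iteC E body => .ite (plug E t) body
  | .switchC E cs d => .switch (plug E t) cs d
  | .callC f before E after => .call f (before ++ plug E t :: after.map Term.val)
  | .opcallC op before E after => .opcall op (before ++ plug E t :: after.map Term.val)
  | .frameC E L rets => .callFrame (plug E t) L rets

/-- Base small-step reduction rules of Yul. -/
inductive Base (D : Dialect Val Op Ext Gl) :
    Term Val Op Ext → Gl → Store Val → NS Val Op Ext →
    Term Val Op Ext → Gl → Store Val → NS Val Op Ext → Prop where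
  | blockEnter (ss G L N) (h : ss ≠ []) :
      Base D (.block ss) G L N (.scopedBlock ss L N) G L (extendFuns ss N)
  | blockEmpty (G L N) :
      Base D (.block []) G L N .regular G L N
  | scopedNext (ss L0 N0 G L N) (h : ss ≠ []) :
      Base D (.scopedBlock (.regular :: ss) L0 N0) G L N (.scopedBlock ss L0 N0) G L N
  | scopedExitReg (L0 N0 G L N) :
      Base D (.scopedBlock [.regular] L0 N0) G L N .regular G (restrict L L0) N0
  | scopedExitIrr (m ss L0 N0 G L N) (h : IsIrregularCore m) :
      Base D (.scopedBlock (m :: ss) L0 N0) G L N m G (restrict L L0) N0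
  | fundefSkip (f ps rs body G L N) :
      Base D (.fundef f ps rs body) G L N .regular G L N
  | letSingle (x v G L N) (h : L x = none) :
      Base D (.letdecl [x] (.val v)) G L N .regular G (updStore L x v) N
  | letTuple (xs vs G L N) (hlen : xs.length = vs.length)
      (hfresh : ∀ x ∈ xs, L x = none) :
      Base D (.letdecl xs (.tuple vs)) G L N .regular G (updMany L xs vs) N
  | assignSingle (x v G L N) (h : (L x).isSome) :
      Base D (.assign [x] (.val v)) G L N .regular G (updStore L x v) N
  | assignTuple (xs vs G L N) (hlen : xs.length = vs.length)
      (hdom : ∀ x ∈ xs, (L x).isSome) :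
      Base D (.assign xs (.tuple vs)) G L N .regular G (updMany L xs vs) N
  | iteFalse (v body G L N) (h : D.isFalse v) :
      Base D (.ite (.val v) body) G L N .regular G L N
  | iteTrue (v body G L N) (h : D.isTrue v) :
      Base D (.ite (.val v) body) G L N body G L N
  | switchDefault (v cs d G L N) (h : ∀ c ∈ cs, c.1 ≠ v) :
      Base D (.switch (.val v) cs d) G L N d G L N
  | switchCase (c body pre post d G L N) (h : ∀ p ∈ pre, p.1 ≠ c) :
      Base D (.switch (.val c) (pre ++ (c, body) :: post) d) G L N body G L N
  | forInit (ss M Sp Sb G L N) (h : ss ≠ []) :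
      Base D (.forloop (.block ss) M Sp Sb) G L N
        (.block (ss ++ [.forloop (.block []) M Sp Sb])) G L N
  | forUnfold (M Sp Sb G L N) :
      Base D (.forloop (.block []) M Sp Sb) G L N
        (.brkFrame (.ite M
          (.block [.cntFrame Sb, Sp, .forloop (.block []) M Sp Sb]))) G L N
  | cntPass (m G L N) (h : m = .regular ∨ m = .brk ∨ m = .leave) :
      Base D (.cntFrame m) G L N m G L N
  | cntCatch (G L N) :
      Base D (.cntFrame .cont) G L N .regular G L N
  | brkPass (m G L N) (h : m = .regular ∨ m = .leave) :
      Base D (.brkFrame m) G L N m G L N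
  | brkCatch (G L N) :
      Base D (.brkFrame .brk) G L N .regular G L N
  | varLookup (x v G L N) (h : L x = some v) :
      Base D (.var x) G L N (.val v) G L N
  | callEnter (f vs ps rs body G L N) (hN : N f = some (ps, rs, body))
      (hlen : ps.length = vs.length) :
      Base D (.call f (vs.map Term.val)) G L N
        (.callFrame body L rs) G
        (updMany (updMany emptyStore rs (rs.map fun _ => D.zero)) ps vs) N
  | frameExit (m Lsave rs ws G L N) (hm : m = .leave ∨ m = .regular)
      (hws : List.Forall₂ (fun z w => L z = some w) rs ws) :
      Base D (.callFrame m Lsave rs) G L N (mkRet ws) G Lsave N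
  | opcallOk (op vs ws G G' L N) (h : D.opc op vs G (Sum.inl ws) G') :
      Base D (.opcall op (vs.map Term.val)) G L N (mkRet ws) G' L N
  | opcallErr (op vs m G G' L N) (h : D.opc op vs G (Sum.inr m) G') :
      Base D (.opcall op (vs.map Term.val)) G L N (.ext m) G' L N

/-- Configurations `⟨S | G; L; N⟩`. -/
abbrev Config (Val Op Ext Gl : Type) :=
  Term Val Op Ext × Gl × Store Val × NS Val Op Ext

/-- The small-step relation: base rules closed under evaluation contexts,
    plus the top-level propagation of external irregular modes. -/
inductive Step (D : Dialect Val Op Ext Gl) :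
    Config Val Op Ext Gl → Config Val Op Ext Gl → Prop where
  | ctx (E S G L N S' G' L' N') (h : Base D S G L N S' G' L' N') :
      Step D (plug E S, G, L, N) (plug E S', G', L', N')
  | extProp (E m G L N) (h : E ≠ Ctx.hole) :
      Step D (plug E (.ext m), G, L, N) (.ext m, G, L, N)

/-- Zero or more small steps. -/
abbrev Steps (D : Dialect Val Op Ext Gl) :
    Config Val Op Ext Gl → Config Val Op Ext Gl → Prop :=
  Relation.ReflTransGen (Step D)

mutual
/-- Big-step evaluation of statements `⟨S | G; L; N⟩ ⇓ ⟨𝕄 | G'; L'; N'⟩`. -/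
inductive Big (D : Dialect Val Op Ext Gl) :
    Term Val Op Ext → Gl → Store Val → NS Val Op Ext →
    Term Val Op Ext → Gl → Store Val → NS Val Op Ext → Prop where
  | blockB {ss M G L N G1 L1}
      (h : BigSeq D ss G L (extendFuns ss N) M G1 L1 (extendFuns ss N)) :
      Big D (.block ss) G L N M G1 (restrict L1 L) N
  | fundefB {f ps rs body G L N} :
      Big D (.fundef f ps rs body) G L N .regular G L N
  | brkB {G L N} : Big D .brk G L N .brk G L N
  | contB {G L N} : Big D .cont G L N .cont G L N
  | leaveB {G L N} : Big D .leave G L N .leave G L N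
  | letSingleB {x e v G L N G1 L1}
      (h1 : BigExp D e G L N (.val v) G1 L1 N) (h2 : L x = none) :
      Big D (.letdecl [x] e) G L N .regular G1 (updStore L1 x v) N
  | letTupleB {xs e vs G L N G1 L1}
      (h1 : BigExp D e G L N (.tuple vs) G1 L1 N)
      (hlen : xs.length = vs.length) (hfresh : ∀ x ∈ xs, L x = none) :
      Big D (.letdecl xs e) G L N .regular G1 (updMany L1 xs vs) N
  | assignSingleB {x e v G L N G1 L1}
      (h1 : BigExp D e G L N (.val v) G1 L1 N) (h2 : (L x).isSome) :
      Big D (.assign [x] e) G L N .regular G1 (updStore L1 x v) N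
  | assignTupleB {xs e vs G L N G1 L1}
      (h1 : BigExp D e G L N (.tuple vs) G1 L1 N)
      (hlen : xs.length = vs.length) (hdom : ∀ x ∈ xs, (L x).isSome) :
      Big D (.assign xs e) G L N .regular G1 (updMany L1 xs vs) N
  | exprB {M G L N G' L'}
      (h : BigExp D M G L N .regular G' L' N) :
      Big D M G L N .regular G' L' N
  | ifF {M body v G L N G0 L0}
      (h1 : BigExp D M G L N (.val v) G0 L0 N) (h2 : D.isFalse v) :
      Big D (.ite M body) G L N .regular G0 L0 N
  | ifT {M body v MM G L N G0 L0 G1 L1}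
      (h1 : BigExp D M G L N (.val v) G0 L0 N) (h2 : D.isTrue v)
      (h3 : Big D body G0 L0 N MM G1 L1 N) :
      Big D (.ite M body) G L N MM G1 L1 N
  | swD {M cs d v MM G L N G0 L0 G1 L1}
      (h1 : BigExp D M G L N (.val v) G0 L0 N)
      (h2 : ∀ c ∈ cs, c.1 ≠ v)
      (h3 : Big D d G0 L0 N MM G1 L1 N) :
      Big D (.switch M cs d) G L N MM G1 L1 N
  | swC {M pre c body post d MM G L N G0 L0 G1 L1}
      (h1 : BigExp D M G L N (.val c) G0 L0 N)
      (hpre : ∀ p ∈ pre, p.1 ≠ c)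
      (h3 : Big D body G0 L0 N MM G1 L1 N) :
      Big D (.switch M (pre ++ (c, body) :: post) d) G L N MM G1 L1 N
  | forInitB {ss M Sp Sb MM G L N G2 L2} (hne : ss ≠ [])
      (h : Big D (.block (ss ++ [.forloop (.block []) M Sp Sb])) G L N MM G2 L2 N) :
      Big D (.forloop (.block ss) M Sp Sb) G L N MM G2 L2 N
  | forFalseB {M Sp Sb v G L N G1 L1}
      (h1 : BigExp D M G L N (.val v) G1 L1 N) (h2 : D.isFalse v) :
      Big D (.forloop (.block []) M Sp Sb) G L N .regular G1 L1 N
  | forHalt1B {M Sp Sb v Mlb Mout G L N G1 L1 G2 L2}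
      (h1 : BigExp D M G L N (.val v) G1 L1 N) (h2 : D.isTrue v)
      (h3 : Big D Sb G1 L1 N Mlb G2 L2 N)
      (h4 : (Mlb = .leave ∧ Mout = .leave) ∨ (Mlb = .brk ∧ Mout = .regular)) :
      Big D (.forloop (.block []) M Sp Sb) G L N Mout G2 L2 N
  | forHalt2B {M Sp Sb v MM G L N G1 L1 G2 L2 G3 L3}
      (h1 : BigExp D M G L N (.val v) G1 L1 N) (h2 : D.isTrue v)
      (h3 : Big D Sb G1 L1 N MM G2 L2 N)
      (h4 : MM = .regular ∨ MM = .cont)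
      (h5 : Big D Sp G2 L2 N .leave G3 L3 N) :
      Big D (.forloop (.block []) M Sp Sb) G L N .leave G3 L3 N
  | forLoopB {M Sp Sb v MM MM' G L N G1 L1 G2 L2 G3 L3 G4 L4}
      (h1 : BigExp D M G L N (.val v) G1 L1 N) (h2 : D.isTrue v)
      (h3 : Big D Sb G1 L1 N MM G2 L2 N)
      (h4 : MM = .regular ∨ MM = .cont)
      (h5 : Big D Sp G2 L2 N .regular G3 L3 N)
      (h6 : Big D (.forloop (.block []) M Sp Sb) G3 L3 N MM' G4 L4 N) :
      Big D (.forloop (.block []) M Sp Sb) G L N MM' G4 L4 N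

/-- Big-step evaluation of statement sequences `⇓_seq`. -/
inductive BigSeq (D : Dialect Val Op Ext Gl) :
    List (Term Val Op Ext) → Gl → Store Val → NS Val Op Ext →
    Term Val Op Ext → Gl → Store Val → NS Val Op Ext → Prop where
  | nilB {G L N} : BigSeq D [] G L N .regular G L N
  | consReg {s ss MM G L N G1 L1 G2 L2}
      (h1 : Big D s G L N .regular G1 L1 N)
      (h2 : BigSeq D ss G1 L1 N MM G2 L2 N) :
      BigSeq D (s :: ss) G L N MM G2 L2 N
  | consIrr {s ss MM G L N G1 L1}
      (h1 : Big D s G L N MM G1 L1 N) (h2 : IsIrregularCore MM) :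
      BigSeq D (s :: ss) G L N MM G1 L1 N

/-- Big-step evaluation of expressions `⇓_exp`. -/
inductive BigExp (D : Dialect Val Op Ext Gl) :
    Term Val Op Ext → Gl → Store Val → NS Val Op Ext →
    Term Val Op Ext → Gl → Store Val → NS Val Op Ext → Prop where
  | identB {x v G L N} (h : L x = some v) :
      BigExp D (.var x) G L N (.val v) G L N
  | valB {v G L N} : BigExp D (.val v) G L N (.val v) G L N
  | funCallB {f args vs ps rs body MM ws G L N Gn Ln G'' L''}
      (hargs : BigArgs D args G L N vs Gn Ln)
      (hN : N f = some (ps, rs, body))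
      (hlen : ps.length = vs.length)
      (hbody : Big D body Gn
        (updMany (updMany emptyStore rs (rs.map fun _ => D.zero)) ps vs) N MM G'' L'' N)
      (hret : List.Forall₂ (fun z w => L'' z = some w) rs ws) :
      BigExp D (.call f args) G L N (mkRet ws) G'' Ln N
  | opCallB {op args vs ws G L N Gn Ln G''}
      (hargs : BigArgs D args G L N vs Gn Ln)
      (h : D.opc op vs Gn (Sum.inl ws) G'') :
      BigExp D (.opcall op args) G L N (mkRet ws) G'' Ln N

/-- Right-to-left evaluation of argument lists. -/
inductive BigArgs (D : Dialect Val Op Ext Gl) :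
    List (Term Val Op Ext) → Gl → Store Val → NS Val Op Ext →
    List Val → Gl → Store Val → Prop where
  | nilA {G L N} : BigArgs D [] G L N [] G L
  | consA {M Ms v vs G L N G1 L1 G2 L2}
      (htail : BigArgs D Ms G L N vs G1 L1)
      (hhead : BigExp D M G1 L1 N (.val v) G2 L2 N) :
      BigArgs D (M :: Ms) G L N (v :: vs) G2 L2
end

/-- Source-level syntax: no runtime constructs. -/
inductive IsSource : Term Val Op Ext → Prop where
  | block {ss} (h : ∀ s ∈ ss, IsSource s) : IsSource (.block ss)
  | fundef {f ps rs body} (h : IsSource body) : IsSource (.fundef f ps rs body)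
  | letdecl {xs e} (h : IsSource e) : IsSource (.letdecl xs e)
  | assign {xs e} (h : IsSource e) : IsSource (.assign xs e)
  | ite {c b} (h1 : IsSource c) (h2 : IsSource b) : IsSource (.ite c b)
  | switch {M cs d} (h1 : IsSource M) (h2 : ∀ c ∈ cs, IsSource c.2)
      (h3 : IsSource d) : IsSource (.switch M cs d)
  | forloop {i c p b} (h1 : IsSource i) (h2 : IsSource c) (h3 : IsSource p)
      (h4 : IsSource b) : IsSource (.forloop i c p b)
  | brk : IsSource .brk
  | cont : IsSource .cont
  | leave : IsSource .leave
  | call {f args} (h : ∀ a ∈ args, IsSource a) : IsSource (.call f args)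
  | opcall {op args} (h : ∀ a ∈ args, IsSource a) : IsSource (.opcall op args)
  | var {x} : IsSource (.var x)
  | val {v} : IsSource (.val v)

/-- Syntactic restriction on halting statements: `HaltOK inLoop inFun S` says that
    every `break`/`continue` in `S` occurs inside the body of some enclosing for-loop
    (not separated from it by a function definition) and every `leave` occurs inside
    some enclosing function body; `inLoop`/`inFun` record the ambient context. -/
inductive HaltOK : Bool → Bool → Term Val Op Ext → Prop where
  | block {il fn ss} (h : ∀ s ∈ ss, HaltOK il fn s) : HaltOK il fn (.block ss)
  | fundef {il fn f ps rs body} (h : HaltOK false true body) :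
      HaltOK il fn (.fundef f ps rs body)
  | letdecl {il fn xs e} (h : HaltOK il fn e) : HaltOK il fn (.letdecl xs e)
  | assign {il fn xs e} (h : HaltOK il fn e) : HaltOK il fn (.assign xs e)
  | ite {il fn c b} (h1 : HaltOK il fn c) (h2 : HaltOK il fn b) :
      HaltOK il fn (.ite c b)
  | switch {il fn M cs d} (h1 : HaltOK il fn M) (h2 : ∀ c ∈ cs, HaltOK il fn c.2)
      (h3 : HaltOK il fn d) : HaltOK il fn (.switch M cs d)
  | forloop {il fn i c p b} (h1 : HaltOK il fn i) (h2 : HaltOK il fn c)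
      (h3 : HaltOK il fn p) (h4 : HaltOK true fn b) :
      HaltOK il fn (.forloop i c p b)
  | brk {fn} : HaltOK true fn .brk
  | cont {fn} : HaltOK true fn .cont
  | leave {il} : HaltOK il true .leave
  | call {il fn f args} (h : ∀ a ∈ args, HaltOK il fn a) : HaltOK il fn (.call f args)
  | opcall {il fn op args} (h : ∀ a ∈ args, HaltOK il fn a) :
      HaltOK il fn (.opcall op args)
  | var {il fn x} : HaltOK il fn (.var x)
  | val {il fn v} : HaltOK il fn (.val v)

/-- Frames: break-catching frames `⟦·⟧_brk` or scoped-block frames `{·}_L^N`. -/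
inductive Frame (Val : Type) where
  | brkF
  | blockF (L : Store Val)

/-- Apply a list of frames (innermost first), all blocks annotated with namespace `N`. -/
def applyFrames (N : NS Val Op Ext) :
    List (Frame Val) → Term Val Op Ext → Term Val Op Ext
  | [], t => t
  | .brkF :: fs, t => applyFrames N fs (.brkFrame t)
  | .blockF L :: fs, t => applyFrames N fs (.scopedBlock [t] L N)

/-- Ascending chain of block-frame domains, starting from `d` (innermost first). -/
def Asc (d : Set Var) : List (Frame Val) → Prop
  | [] => True
  | .brkF :: fs => Asc d fs
  | .blockF L :: fs => d ⊆ Dom L ∧ Asc (Dom L) fs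

section DetAux

variable {D : Dialect Val Op Ext Gl}

/-- A redex: either the left-hand side of some base rule, or an external mode. -/
def Redex (D : Dialect Val Op Ext Gl) (t : Term Val Op Ext) : Prop :=
  (∃ G L N S' G' L' N', Base D t G L N S' G' L' N') ∨ ∃ m, t = Term.ext m

/-- "Simple" terms: values, tuples and core modes.  No redex is simple. -/
def Simple (t : Term Val Op Ext) : Prop :=
  (∃ v, t = .val v) ∨ (∃ vs, t = .tuple vs) ∨ t = .regular ∨ t = .brk ∨
    t = .cont ∨ t = .leave

lemma redex_not_simple {r : Term Val Op Ext} (h : Redex D r) : ¬ Simple r := by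
  rcases h with ⟨G, L, N, S', G', L', N', hb⟩ | ⟨m, rfl⟩
  · cases hb <;> simp [Simple]
  · simp [Simple]

lemma plug_not_simple {r : Term Val Op Ext} (h : Redex D r) (E : Ctx Val Op Ext) :
    ¬ Simple (plug E r) := by
  cases E
  · exact redex_not_simple h
  all_goals simp [Simple, plug]

lemma plug_ne_val {r : Term Val Op Ext} (h : Redex D r) (E : Ctx Val Op Ext) (v : Val) :
    plug E r ≠ .val v := fun he => plug_not_simple h E (Or.inl ⟨v, he⟩)

lemma val_injective : Function.Injective (Term.val : Val → Term Val Op Ext) :=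
  fun _ _ h => by injection h

lemma map_val_inj {vs ws : List Val}
    (h : vs.map (Term.val : Val → Term Val Op Ext) = ws.map Term.val) : vs = ws :=
  List.map_injective_iff.mpr val_injective h

lemma split_unique : ∀ (b1 b2 : List (Term Val Op Ext)) (x1 x2 : Term Val Op Ext)
    (a1 a2 : List Val), (∀ v, x1 ≠ Term.val v) → (∀ v, x2 ≠ Term.val v) →
    b1 ++ x1 :: a1.map Term.val = b2 ++ x2 :: a2.map Term.val →
    b1 = b2 ∧ x1 = x2 ∧ a1 = a2 := by
  intro b1
  induction b1 with
  | nil =>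
    intro b2 x1 x2 a1 a2 h1 h2 h
    cases b2 with
    | nil =>
      simp only [List.nil_append, List.cons.injEq] at h
      exact ⟨rfl, h.1, map_val_inj h.2⟩
    | cons y b2' =>
      simp only [List.nil_append, List.cons_append, List.cons.injEq] at h
      exfalso
      have hx : x2 ∈ a1.map (Term.val : Val → Term Val Op Ext) := by
        rw [h.2]; exact List.mem_append_right _ List.mem_cons_self
      rcases List.mem_map.mp hx with ⟨v, _, hv⟩
      exact h2 v hv.symm
  | cons y b1' ih =>
    intro b2 x1 x2 a1 a2 h1 h2 h
    cases b2 with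
    | nil =>
      simp only [List.nil_append, List.cons_append, List.cons.injEq] at h
      exfalso
      have hx : x1 ∈ a2.map (Term.val : Val → Term Val Op Ext) := by
        rw [← h.2]; exact List.mem_append_right _ List.mem_cons_self
      rcases List.mem_map.mp hx with ⟨v, _, hv⟩
      exact h1 v hv.symm
    | cons y' b2' =>
      simp only [List.cons_append, List.cons.injEq] at h
      obtain ⟨he, hx, ha⟩ := ih b2' x1 x2 a1 a2 h1 h2 h.2
      exact ⟨by rw [h.1, he], hx, ha⟩

lemma case_unique : ∀ (pre pre' : List (Val × Term Val Op Ext)) (c : Val)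
    (b b' : Term Val Op Ext) (post post' : List (Val × Term Val Op Ext)),
    (∀ p ∈ pre, p.1 ≠ c) → (∀ p ∈ pre', p.1 ≠ c) →
    pre ++ (c, b) :: post = pre' ++ (c, b') :: post' →
    pre = pre' ∧ b = b' ∧ post = post' := by
  intro pre
  induction pre with
  | nil =>
    intro pre' c b b' post post' h1 h2 h
    cases pre' with
    | nil =>
      simp only [List.nil_append, List.cons.injEq, Prod.mk.injEq] at h
      exact ⟨rfl, h.1.2, h.2⟩
    | cons q prer =>
      simp only [List.nil_append, List.cons_append, List.cons.injEq] at h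
      exact absurd (congrArg Prod.fst h.1).symm (h2 q List.mem_cons_self)
  | cons q prer ih =>
    intro pre' c b b' post post' h1 h2 h
    cases pre' with
    | nil =>
      simp only [List.nil_append, List.cons_append, List.cons.injEq] at h
      exact absurd (congrArg Prod.fst h.1) (h1 q List.mem_cons_self)
    | cons q' prer' =>
      simp only [List.cons_append, List.cons.injEq] at h
      obtain ⟨he, hb, hp⟩ := ih prer' c b b' post post'
        (fun p hp => h1 p (List.mem_cons_of_mem _ hp))
        (fun p hp => h2 p (List.mem_cons_of_mem _ hp)) h.2
      exact ⟨by rw [h.1, he], hb, hp⟩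

lemma forall2_det {L : Store Val} {rs : List Var} {ws ws' : List Val}
    (h1 : List.Forall₂ (fun z w => L z = some w) rs ws)
    (h2 : List.Forall₂ (fun z w => L z = some w) rs ws') : ws = ws' := by
  induction h1 generalizing ws' with
  | nil => cases h2; rfl
  | cons h t ih =>
    cases h2 with
    | cons h' t' =>
      rw [ih t']
      rw [h] at h'
      rw [Option.some_inj.mp h']

lemma mem_map_val_of_append {b : List (Term Val Op Ext)} {x : Term Val Op Ext}
    {a vs : List Val}
    (h : b ++ x :: a.map Term.val = vs.map Term.val) : ∃ v, x = Term.val v := by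
  have hx : x ∈ vs.map (Term.val : Val → Term Val Op Ext) := by
    rw [← h]; exact List.mem_append_right _ List.mem_cons_self
  rcases List.mem_map.mp hx with ⟨v, _, hv⟩
  exact ⟨v, hv.symm⟩

lemma plug_eq_redex : ∀ (E : Ctx Val Op Ext) {r r' : Term Val Op Ext},
    Redex D r → Redex D r' → plug E r' = r → E = Ctx.hole ∧ r' = r := by
  intro E r r' hr hr' h
  cases E with
  | hole => exact ⟨rfl, h⟩
  | scopedC E2 rest L N =>
    exfalso; subst h
    rcases hr with ⟨_, _, _, _, _, _, _, hb⟩ | ⟨m, hm⟩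
    · simp only [plug] at hb
      generalize hq : plug E2 r' = q at hb
      apply plug_not_simple hr' E2
      rw [hq]
      cases hb <;>
        first
          | (simp [Simple]; done)
          | (rename_i hmm; rcases hmm with rfl | rfl | rfl <;> simp [Simple])
    · simp [plug] at hm
  | letC xs E2 =>
    exfalso; subst h
    rcases hr with ⟨_, _, _, _, _, _, _, hb⟩ | ⟨m, hm⟩
    · simp only [plug] at hb
      generalize hq : plug E2 r' = q at hb
      apply plug_not_simple hr' E2
      rw [hq]
      cases hb <;> simp [Simple]
    · simp [plug] at hm
  | assignC xs E2 =>
    exfalso; subst h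
    rcases hr with ⟨_, _, _, _, _, _, _, hb⟩ | ⟨m, hm⟩
    · simp only [plug] at hb
      generalize hq : plug E2 r' = q at hb
      apply plug_not_simple hr' E2
      rw [hq]
      cases hb <;> simp [Simple]
    · simp [plug] at hm
  | cntC E2 =>
    exfalso; subst h
    rcases hr with ⟨_, _, _, _, _, _, _, hb⟩ | ⟨m, hm⟩
    · simp only [plug] at hb
      generalize hq : plug E2 r' = q at hb
      apply plug_not_simple hr' E2
      rw [hq]
      cases hb <;>
        first
          | (simp [Simple]; done)
          | (rename_i hmm; rcases hmm with rfl | rfl | rfl <;> simp [Simple])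
    · simp [plug] at hm
  | brkC E2 =>
    exfalso; subst h
    rcases hr with ⟨_, _, _, _, _, _, _, hb⟩ | ⟨m, hm⟩
    · simp only [plug] at hb
      generalize hq : plug E2 r' = q at hb
      apply plug_not_simple hr' E2
      rw [hq]
      cases hb <;>
        first
          | (simp [Simple]; done)
          | (rename_i hmm; rcases hmm with rfl | rfl <;> simp [Simple])
    · simp [plug] at hm
  | iteC E2 body =>
    exfalso; subst h
    rcases hr with ⟨_, _, _, _, _, _, _, hb⟩ | ⟨m, hm⟩
    · simp only [plug] at hb
      generalize hq : plug E2 r' = q at hb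
      apply plug_not_simple hr' E2
      rw [hq]
      cases hb <;> simp [Simple]
    · simp [plug] at hm
  | switchC E2 cs d =>
    exfalso; subst h
    rcases hr with ⟨_, _, _, _, _, _, _, hb⟩ | ⟨m, hm⟩
    · simp only [plug] at hb
      generalize hq : plug E2 r' = q at hb
      apply plug_not_simple hr' E2
      rw [hq]
      cases hb <;> simp [Simple]
    · simp [plug] at hm
  | callC f before E2 after =>
    exfalso; subst h
    rcases hr with ⟨_, _, _, _, _, _, _, hb⟩ | ⟨m, hm⟩
    · simp only [plug] at hb
      generalize hq : before ++ plug E2 r' :: after.map Term.val = args at hb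
      cases hb <;>
        (rcases mem_map_val_of_append hq with ⟨v, hv⟩
         exact plug_ne_val hr' E2 v hv)
    · simp [plug] at hm
  | opcallC op before E2 after =>
    exfalso; subst h
    rcases hr with ⟨_, _, _, _, _, _, _, hb⟩ | ⟨m, hm⟩
    · simp only [plug] at hb
      generalize hq : before ++ plug E2 r' :: after.map Term.val = args at hb
      cases hb <;>
        (rcases mem_map_val_of_append hq with ⟨v, hv⟩
         exact plug_ne_val hr' E2 v hv)
    · simp [plug] at hm
  | frameC E2 L rets =>
    exfalso; subst h
    rcases hr with ⟨_, _, _, _, _, _, _, hb⟩ | ⟨m, hm⟩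
    · simp only [plug] at hb
      generalize hq : plug E2 r' = q at hb
      apply plug_not_simple hr' E2
      rw [hq]
      cases hb <;>
        first
          | (simp [Simple]; done)
          | (rename_i hmm hws; rcases hmm with rfl | rfl <;> simp [Simple])
    · simp [plug] at hm

lemma plug_uniq : ∀ (E E' : Ctx Val Op Ext) {r r' : Term Val Op Ext},
    Redex D r → Redex D r' → plug E r = plug E' r' → E = E' ∧ r = r' := by
  intro E
  induction E with
  | hole =>
    intro E' r r' hr hr' h
    obtain ⟨he, hre⟩ := plug_eq_redex E' hr hr' h.symm
    exact ⟨he.symm, hre.symm⟩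
  | scopedC E2 rest L N ih =>
    intro E' r r' hr hr' h
    cases E'
    case hole => exact absurd (plug_eq_redex _ hr' hr h).1 (by simp)
    case scopedC E2' rest' L' N' =>
      simp only [plug, Term.scopedBlock.injEq, List.cons.injEq] at h
      obtain ⟨⟨h1, h2⟩, h3, h4⟩ := h
      obtain ⟨hE, hrr⟩ := ih E2' hr hr' h1
      subst h2; subst h3; subst h4; subst hE
      exact ⟨rfl, hrr⟩
    all_goals exact absurd h (by simp [plug])
  | letC xs E2 ih =>
    intro E' r r' hr hr' h
    cases E'
    case hole => exact absurd (plug_eq_redex _ hr' hr h).1 (by simp)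
    case letC xs' E2' =>
      simp only [plug, Term.letdecl.injEq] at h
      obtain ⟨h1, h2⟩ := h
      obtain ⟨hE, hrr⟩ := ih E2' hr hr' h2
      subst h1; subst hE
      exact ⟨rfl, hrr⟩
    all_goals exact absurd h (by simp [plug])
  | assignC xs E2 ih =>
    intro E' r r' hr hr' h
    cases E'
    case hole => exact absurd (plug_eq_redex _ hr' hr h).1 (by simp)
    case assignC xs' E2' =>
      simp only [plug, Term.assign.injEq] at h
      obtain ⟨h1, h2⟩ := h
      obtain ⟨hE, hrr⟩ := ih E2' hr hr' h2
      subst h1; subst hE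
      exact ⟨rfl, hrr⟩
    all_goals exact absurd h (by simp [plug])
  | cntC E2 ih =>
    intro E' r r' hr hr' h
    cases E'
    case hole => exact absurd (plug_eq_redex _ hr' hr h).1 (by simp)
    case cntC E2' =>
      simp only [plug, Term.cntFrame.injEq] at h
      obtain ⟨hE, hrr⟩ := ih E2' hr hr' h
      subst hE
      exact ⟨rfl, hrr⟩
    all_goals exact absurd h (by simp [plug])
  | brkC E2 ih =>
    intro E' r r' hr hr' h
    cases E'
    case hole => exact absurd (plug_eq_redex _ hr' hr h).1 (by simp)
    case brkC E2' =>
      simp only [plug, Term.brkFrame.injEq] at h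
      obtain ⟨hE, hrr⟩ := ih E2' hr hr' h
      subst hE
      exact ⟨rfl, hrr⟩
    all_goals exact absurd h (by simp [plug])
  | iteC E2 body ih =>
    intro E' r r' hr hr' h
    cases E'
    case hole => exact absurd (plug_eq_redex _ hr' hr h).1 (by simp)
    case iteC E2' body' =>
      simp only [plug, Term.ite.injEq] at h
      obtain ⟨h1, h2⟩ := h
      obtain ⟨hE, hrr⟩ := ih E2' hr hr' h1
      subst h2; subst hE
      exact ⟨rfl, hrr⟩
    all_goals exact absurd h (by simp [plug])
  | switchC E2 cs d ih =>
    intro E' r r' hr hr' h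
    cases E'
    case hole => exact absurd (plug_eq_redex _ hr' hr h).1 (by simp)
    case switchC E2' cs' d' =>
      simp only [plug, Term.switch.injEq] at h
      obtain ⟨h1, h2, h3⟩ := h
      obtain ⟨hE, hrr⟩ := ih E2' hr hr' h1
      subst h2; subst h3; subst hE
      exact ⟨rfl, hrr⟩
    all_goals exact absurd h (by simp [plug])
  | callC f before E2 after ih =>
    intro E' r r' hr hr' h
    cases E'
    case hole => exact absurd (plug_eq_redex _ hr' hr h).1 (by simp)
    case callC f' before' E2' after' =>
      simp only [plug, Term.call.injEq] at h
      obtain ⟨h1, h2⟩ := h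
      obtain ⟨hb, hx, ha⟩ := split_unique before before' _ _ after after'
        (fun v => plug_ne_val hr E2 v) (fun v => plug_ne_val hr' E2' v) h2
      obtain ⟨hE, hrr⟩ := ih E2' hr hr' hx
      subst h1; subst hb; subst ha; subst hE
      exact ⟨rfl, hrr⟩
    all_goals exact absurd h (by simp [plug])
  | opcallC op before E2 after ih =>
    intro E' r r' hr hr' h
    cases E'
    case hole => exact absurd (plug_eq_redex _ hr' hr h).1 (by simp)
    case opcallC op' before' E2' after' =>
      simp only [plug, Term.opcall.injEq] at h
      obtain ⟨h1, h2⟩ := h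
      obtain ⟨hb, hx, ha⟩ := split_unique before before' _ _ after after'
        (fun v => plug_ne_val hr E2 v) (fun v => plug_ne_val hr' E2' v) h2
      obtain ⟨hE, hrr⟩ := ih E2' hr hr' hx
      subst h1; subst hb; subst ha; subst hE
      exact ⟨rfl, hrr⟩
    all_goals exact absurd h (by simp [plug])
  | frameC E2 L rets ih =>
    intro E' r r' hr hr' h
    cases E'
    case hole => exact absurd (plug_eq_redex _ hr' hr h).1 (by simp)
    case frameC E2' L' rets' =>
      simp only [plug, Term.callFrame.injEq] at h
      obtain ⟨h1, h2, h3⟩ := h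
      obtain ⟨hE, hrr⟩ := ih E2' hr hr' h1
      subst h2; subst h3; subst hE
      exact ⟨rfl, hrr⟩
    all_goals exact absurd h (by simp [plug])

lemma base_det
    (hopc : ∀ op vs g r1 g1 r2 g2,
      D.opc op vs g r1 g1 → D.opc op vs g r2 g2 → r1 = r2 ∧ g1 = g2)
    (htf : ∀ v, ¬ (D.isTrue v ∧ D.isFalse v))
    {S G L N S1 G1 L1 N1 S2 G2 L2 N2}
    (h1 : Base D S G L N S1 G1 L1 N1) (h2 : Base D S G L N S2 G2 L2 N2) :
    S1 = S2 ∧ G1 = G2 ∧ L1 = L2 ∧ N1 = N2 := by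
  cases h1
  case iteFalse v body hf =>
    cases h2
    case iteFalse hf2 => exact ⟨rfl, rfl, rfl, rfl⟩
    case iteTrue ht2 => exact absurd ⟨ht2, hf⟩ (htf v)
  case iteTrue v ht =>
    cases h2
    case iteFalse hf2 => exact absurd ⟨ht, hf2⟩ (htf v)
    case iteTrue ht2 => exact ⟨rfl, rfl, rfl, rfl⟩
  case switchCase c pre post d hpre =>
    generalize hcs : pre ++ (c, S1) :: post = cs at h2
    cases h2
    case switchDefault hd =>
      exfalso
      refine hd (c, S1) ?_ rfl
      rw [← hcs]
      exact List.mem_append_right _ List.mem_cons_self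
    case switchCase pre' post' hpre' =>
      obtain ⟨rfl, rfl, rfl⟩ :=
        case_unique pre pre' c S1 S2 post post' hpre hpre' hcs
      exact ⟨rfl, rfl, rfl, rfl⟩
  case callEnter f vs ps rs body hlen hN =>
    generalize hargs : vs.map Term.val = args at h2
    cases h2
    case callEnter vs' ps' rs' body' hlen' hN' =>
      obtain rfl := map_val_inj hargs
      have h3 := hN.symm.trans hN'
      simp only [Option.some.injEq, Prod.mk.injEq] at h3
      obtain ⟨rfl, rfl, rfl⟩ := h3
      exact ⟨rfl, rfl, rfl, rfl⟩
  case opcallOk op vs ws hop =>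
    generalize hargs : vs.map Term.val = args at h2
    cases h2
    case opcallOk vs' ws' hop' =>
      obtain rfl := map_val_inj hargs
      obtain ⟨hw, rfl⟩ := hopc _ _ _ _ _ _ _ hop hop'
      injection hw with hw'
      subst hw'
      exact ⟨rfl, rfl, rfl, rfl⟩
    case opcallErr vs' m2 hop' =>
      obtain rfl := map_val_inj hargs
      obtain ⟨hw, rfl⟩ := hopc _ _ _ _ _ _ _ hop hop'
      exact absurd hw (by simp)
  case opcallErr op vs m hop =>
    generalize hargs : vs.map Term.val = args at h2
    cases h2
    case opcallOk vs' ws' hop' =>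
      obtain rfl := map_val_inj hargs
      obtain ⟨hw, rfl⟩ := hopc _ _ _ _ _ _ _ hop hop'
      exact absurd hw (by simp)
    case opcallErr vs' m' hop' =>
      obtain rfl := map_val_inj hargs
      obtain ⟨hw, rfl⟩ := hopc _ _ _ _ _ _ _ hop hop'
      injection hw with hw'
      subst hw'
      exact ⟨rfl, rfl, rfl, rfl⟩
  case frameExit m rs ws hm hws =>
    cases h2
    case frameExit ws' hm' hws' =>
      obtain rfl := forall2_det hws hws'
      exact ⟨rfl, rfl, rfl, rfl⟩
  all_goals cases h2 <;>
    first
      | exact ⟨rfl, rfl, rfl, rfl⟩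
      | (simp_all [IsIrregularCore]; done)
      | (simp_all [IsIrregularCore]
         rename_i hh
         exact absurd rfl (hh _ _ (Or.inr (Or.inl ⟨rfl, rfl⟩))))

end DetAux

/-- Determinism of the small-step semantics, given a deterministic
    opcode relation and disjoint true/false classification of values. -/
theorem step_deterministic {Val Op Ext Gl : Type} (D : Dialect Val Op Ext Gl)
    (hopc : ∀ op vs g r1 g1 r2 g2,
      D.opc op vs g r1 g1 → D.opc op vs g r2 g2 → r1 = r2 ∧ g1 = g2)
    (htf : ∀ v, ¬ (D.isTrue v ∧ D.isFalse v))
    {c c1 c2 : Config Val Op Ext Gl}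
    (h1 : Step D c c1) (h2 : Step D c c2) : c1 = c2 := by
  cases h1 with
  | ctx E S G L N S' G' L' N' hb =>
    generalize hT : plug E S = T at h2
    cases h2 with
    | ctx E2 S2 G2 L2 N2 S2' G2' L2' N2' hb2 =>
      obtain ⟨hE, hSS⟩ := plug_uniq E E2 (Or.inl ⟨_, _, _, _, _, _, _, hb⟩)
        (Or.inl ⟨_, _, _, _, _, _, _, hb2⟩) hT
      subst hE; subst hSS
      obtain ⟨r1, r2, r3, r4⟩ := base_det hopc htf hb hb2
      rw [r1, r2, r3, r4]
    | extProp E2 m G2 L2 N2 hne =>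
      obtain ⟨hE, hSS⟩ := plug_uniq E E2 (Or.inl ⟨_, _, _, _, _, _, _, hb⟩)
        (Or.inr ⟨m, rfl⟩) hT
      subst hSS
      cases hb
  | extProp E m G L N hne =>
    generalize hT : plug E (.ext m) = T at h2
    cases h2 with
    | ctx E2 S2 G2 L2 N2 S2' G2' L2' N2' hb2 =>
      obtain ⟨hE, hSS⟩ := plug_uniq E E2 (Or.inr ⟨m, rfl⟩)
        (Or.inl ⟨_, _, _, _, _, _, _, hb2⟩) hT
      subst hE
      rw [← hSS] at hb2
      cases hb2
    | extProp E2 m2 G2 L2 N2 hne2 =>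
      obtain ⟨hE, hSS⟩ := plug_uniq (D := D) E E2 (Or.inr ⟨m, rfl⟩) (Or.inr ⟨m2, rfl⟩) hT
      injection hSS with hm
      rw [hm]

end Yul
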